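/- Let j ∈ ℝ with 2j ∉ ℤ, let p ∈ ℕ, and let z < 0 be a real number. Setting q(ρ) := −z·e^{ρ}, one has lim_{ρ→+∞} e^{−ρp} · (q(ρ)+i)^p · ∑_{k=0}^{p} ((−j)_k (−p)_k / ((j−p+1)_k · k!)) · ((q(ρ)−i)/(q(ρ)+i))^k = (−z)^p · Γ(2j+1)·Γ(j−p+1) / (Γ(2j−p+1)·Γ(j+1)). -/

import Mathlib

/-!
Writing `q = -z e^ρ`, the prefactor `e^{-ρp} (q+i)^p` is `(-z)^p ((q+i)/q)^p`, and both `(q+i)/q`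
and `(q-i)/(q+i)` tend to `1` as `q → ∞`; so the expression tends to `(-z)^p` times the
hypergeometric sum at argument `1`. By Chu–Vandermonde that sum is `(2j-p+1)_p / (j-p+1)_p`, and
`Γ(a+p)/Γ(a) = (a)_p` turns this into the Gamma quotient. The hypothesis `2j ∉ ℤ` keeps
`2j-p+1` and `j-p+1` away from the poles of `Γ`.
-/

/-- Ascending Pochhammer symbol `(a)_k = a (a+1) ⋯ (a+k-1)`. -/
noncomputable def pochC (a : ℂ) (k : ℕ) : ℂ := ∏ i ∈ Finset.range k, (a + i)

open Polynomial Finset Filter Topology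

namespace Polynomial

variable {R : Type*} [CommRing R]

lemma descPochhammer_smeval_eq_eval (r : R) (n : ℕ) :
    (descPochhammer ℤ n).smeval r = (descPochhammer R n).eval r := by
  rw [descPochhammer_smeval_eq_ascPochhammer, ascPochhammer_smeval_eq_eval,
    descPochhammer_eval_eq_ascPochhammer]

lemma descPochhammer_eval_add (r s : R) (n : ℕ) :
    (descPochhammer R n).eval (r + s) =
      ∑ k ∈ range (n + 1), n.choose k * (descPochhammer R k).eval r *
        (descPochhammer R (n - k)).eval s := by
  rw [← descPochhammer_smeval_eq_eval, Ring.descPochhammer_smeval_add n (Commute.all r s),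
    Nat.sum_antidiagonal_eq_sum_range_succ
      fun i j => (n.choose i : R) *
        ((descPochhammer ℤ i).smeval r * (descPochhammer ℤ j).smeval s)]
  simp only [descPochhammer_smeval_eq_eval, mul_assoc]

lemma ascPochhammer_eval_mul_eval_add (c : R) (k m : ℕ) :
    (ascPochhammer R k).eval c * (ascPochhammer R m).eval (c + k) =
      (ascPochhammer R (k + m)).eval c := by
  rw [← ascPochhammer_mul, eval_mul, eval_comp, eval_add, eval_X, eval_natCast]

lemma ascPochhammer_eval_neg_natCast (n k : ℕ) :
    (ascPochhammer R k).eval (-(n : R)) = (-1) ^ k * (k.factorial * n.choose k : ℕ) := by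
  rw [ascPochhammer_eval_neg_eq_descPochhammer, descPochhammer_eval_eq_descFactorial,
    Nat.descFactorial_eq_factorial_mul_choose]

/-- Chu–Vandermonde: `₂F₁(b, -p; c; 1) = (c - b)_p / (c)_p`. -/
theorem sum_ascPochhammer_eval_neg_natCast_div {K : Type*} [Field K] [CharZero K] (b c : K)
    (p : ℕ) (hc : (ascPochhammer K p).eval c ≠ 0) :
    ∑ k ∈ range (p + 1), (ascPochhammer K k).eval b * (ascPochhammer K k).eval (-(p : K)) /
        ((ascPochhammer K k).eval c * k.factorial) =
      (ascPochhammer K p).eval (c - b) / (ascPochhammer K p).eval c := by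
  -- Reflected into descending symbols, `(b)_k` and `(c+k)_{p-k}` make each term a term of the
  -- descending Vandermonde convolution.
  have hsum : (ascPochhammer K p).eval (c - b) =
      ∑ k ∈ range (p + 1), p.choose k * (descPochhammer K k).eval (-b) *
        (descPochhammer K (p - k)).eval (c + p - 1) := by
    rw [← descPochhammer_eval_add, descPochhammer_eval_eq_ascPochhammer]
    congr 1; ring
  rw [eq_div_iff hc, sum_mul, hsum]
  refine sum_congr rfl fun k hk => ?_
  obtain ⟨m, rfl⟩ := Nat.exists_eq_add_of_le (Nat.lt_succ_iff.1 (mem_range.1 hk))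
  rw [← ascPochhammer_eval_mul_eval_add] at hc ⊢
  have hck : (ascPochhammer K k).eval c ≠ 0 := left_ne_zero_of_mul hc
  have hb : (ascPochhammer K k).eval b = (-1) ^ k * (descPochhammer K k).eval (-b) := by
    simpa using ascPochhammer_eval_neg_eq_descPochhammer K (-b) k
  have hc' : (descPochhammer K m).eval (c + (k + m : ℕ) - 1) =
      (ascPochhammer K m).eval (c + k) := by
    rw [descPochhammer_eval_eq_ascPochhammer]; congr 1; push_cast; ring
  rw [ascPochhammer_eval_neg_natCast, hb, Nat.add_sub_cancel_left, hc']
  have hfact : (k.factorial : K) ≠ 0 := Nat.cast_ne_zero.2 k.factorial_ne_zero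
  field_simp
  rw [← pow_mul, pow_mul', neg_one_sq, one_pow]
  push_cast
  ring

end Polynomial

open Complex

lemma Gamma_add_nat_mul_Gamma_div_eq {a b : ℂ} (n : ℕ) (ha : ∀ k : ℕ, a ≠ -k)
    (hb : ∀ k : ℕ, b ≠ -k) :
    Gamma (a + n) * Gamma b / (Gamma a * Gamma (b + n)) =
      (ascPochhammer ℂ n).eval a / (ascPochhammer ℂ n).eval b := by
  rw [← Gamma_add_nat_div_Gamma_eq a ha, ← Gamma_add_nat_div_Gamma_eq b hb, div_div_div_eq,
    mul_comm (Gamma a)]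

lemma ofReal_add_intCast_ne_neg_natCast {x : ℝ} (hx : ∀ m : ℤ, x ≠ m) (n : ℤ) (k : ℕ) :
    (x : ℂ) + n ≠ -k := by
  intro h
  apply hx (-k - n)
  have := congrArg re h
  simp only [add_re, ofReal_re, intCast_re, neg_re, natCast_re] at this
  push_cast
  linarith

lemma tendsto_ofReal_add_div_self (w : ℂ) :
    Tendsto (fun q : ℝ => ((q : ℂ) + w) / q) atTop (𝓝 1) := by
  have hinv : Tendsto (fun q : ℝ => ((q⁻¹ : ℝ) : ℂ)) atTop (𝓝 0) := by
    rw [← ofReal_zero]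
    exact (continuous_ofReal.tendsto 0).comp tendsto_inv_atTop_zero
  have := (hinv.const_mul w).const_add 1
  rw [mul_zero, add_zero] at this
  refine this.congr' ?_
  filter_upwards [eventually_ne_atTop 0] with q hq
  have : (q : ℂ) ≠ 0 := ofReal_ne_zero.2 hq
  push_cast
  field_simp

lemma tendsto_add_I_div_pow_mul_sum (s : Finset ℕ) (c : ℕ → ℂ) (n : ℕ) :
    Tendsto (fun q : ℝ => (((q : ℂ) + I) / q) ^ n *
        ∑ k ∈ s, c k * (((q : ℂ) - I) / ((q : ℂ) + I)) ^ k)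
      atTop (𝓝 (∑ k ∈ s, c k)) := by
  have hratio : Tendsto (fun q : ℝ => ((q : ℂ) - I) / ((q : ℂ) + I)) atTop (𝓝 1) := by
    have := (tendsto_ofReal_add_div_self (-I)).div (tendsto_ofReal_add_div_self I) one_ne_zero
    rw [div_one] at this
    refine this.congr' ?_
    filter_upwards [eventually_ne_atTop 0] with q hq
    rw [Pi.div_apply, div_div_div_cancel_right₀ (ofReal_ne_zero.2 hq), sub_eq_add_neg]
  simpa using ((tendsto_ofReal_add_div_self I).pow n).mul
    (tendsto_finsetSum s fun k _ => (hratio.pow k).const_mul (c k))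

lemma pochC_eq_eval_ascPochhammer (a : ℂ) (k : ℕ) :
    pochC a k = (ascPochhammer ℂ k).eval a := by
  induction k with
  | zero => simp [pochC]
  | succ k ih => rw [pochC, prod_range_succ, ← pochC, ih, ascPochhammer_succ_eval]

lemma Gamma_quotient_eq_sum_pochC {j : ℝ} (hj : ∀ m : ℤ, 2 * j ≠ m) (p : ℕ) :
    Gamma (2 * (j : ℂ) + 1) * Gamma ((j : ℂ) - p + 1) /
        (Gamma (2 * (j : ℂ) - p + 1) * Gamma ((j : ℂ) + 1)) =
      ∑ k ∈ range (p + 1), pochC (-(j : ℂ)) k * pochC (-(p : ℂ)) k /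
        (pochC ((j : ℂ) - p + 1) k * (Nat.factorial k : ℂ)) := by
  have h2j (k : ℕ) : 2 * (j : ℂ) - p + 1 ≠ -k := by
    convert ofReal_add_intCast_ne_neg_natCast hj (1 - p) k using 1
    push_cast; ring
  have hj1 (k : ℕ) : (j : ℂ) - p + 1 ≠ -k := by
    have hj' (m : ℤ) : j ≠ m := fun h => hj (2 * m) (by rw [h]; push_cast; ring)
    convert ofReal_add_intCast_ne_neg_natCast hj' (1 - p) k using 1
    push_cast; ring
  have hpoch : (ascPochhammer ℂ p).eval ((j : ℂ) - p + 1) ≠ 0 := by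
    rw [Ne, ascPochhammer_eval_eq_zero_iff]
    rintro ⟨k, -, hk⟩
    exact hj1 k (by rw [hk, neg_neg])
  have hG := Gamma_add_nat_mul_Gamma_div_eq p h2j hj1
  rw [show 2 * (j : ℂ) - p + 1 + p = 2 * j + 1 by ring,
    show (j : ℂ) - p + 1 + p = j + 1 by ring] at hG
  rw [hG, show 2 * (j : ℂ) - p + 1 = (j - p + 1) - (-j) by ring,
    ← sum_ascPochhammer_eval_neg_natCast_div _ _ p hpoch]
  simp only [pochC_eq_eval_ascPochhammer]

/-- Large-`ρ` asymptotics of the closed-form right Wilson matrix element. -/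
theorem stmt_7 (j : ℝ) (hj : ∀ m : ℤ, 2 * j ≠ (m : ℝ)) (p : ℕ) (z : ℝ) (hz : z < 0) :
    Filter.Tendsto
      (fun ρ : ℝ =>
        ((Real.exp (-(ρ * p)) : ℝ) : ℂ) *
          (((-z * Real.exp ρ : ℝ) : ℂ) + Complex.I) ^ p *
          ∑ k ∈ Finset.range (p + 1),
            pochC (-(j : ℂ)) k * pochC (-(p : ℂ)) k /
                (pochC ((j : ℂ) - p + 1) k * (Nat.factorial k : ℂ)) *
              ((((-z * Real.exp ρ : ℝ) : ℂ) - Complex.I) /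
                (((-z * Real.exp ρ : ℝ) : ℂ) + Complex.I)) ^ k)
      Filter.atTop
      (nhds ((((-z : ℝ) ^ p : ℝ) : ℂ) * Complex.Gamma (2 * (j : ℂ) + 1) *
        Complex.Gamma ((j : ℂ) - p + 1) /
        (Complex.Gamma (2 * (j : ℂ) - p + 1) * Complex.Gamma ((j : ℂ) + 1)))) := by
  have hq : Tendsto (fun ρ => -z * Real.exp ρ) atTop atTop :=
    Real.tendsto_exp_atTop.const_mul_atTop (neg_pos.2 hz)
  rw [mul_assoc _ (Gamma _), mul_div_assoc, Gamma_quotient_eq_sum_pochC hj p]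
  refine (((tendsto_add_I_div_pow_mul_sum _ _ p).comp hq).const_mul _).congr fun ρ => ?_
  have hexp : Real.exp (-(ρ * p)) = (-z) ^ p / (-z * Real.exp ρ) ^ p := by
    rw [mul_pow, ← Real.exp_nat_mul, mul_comm, Real.exp_neg]
    field_simp [(neg_pos.2 hz).ne']
  simp only [Function.comp_apply]
  rw [hexp, ofReal_div, ofReal_pow, ofReal_pow, div_pow]
  ring
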